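/- arXiv:2110.08320 — 2 statements merged into one kernel-verified Lean document; each statement's English description precedes it below -/
import Mathlib

section
/- Let H ∈ (0,1/2) and let C_H := ∫₀^∞ (y^{H-1/2} - (y+1)^{H-1/2})² dy < ∞. Then for every t ≥ 0 and every ε > 0, ∫₀^t (K(t,s) - K(t+ε,s))² ds ≤ C_H·ε^{2H}/Γ(H+1/2)². -/
/-!
Substituting `u = t - s` and then `u = ε y` turns the integral into
`ε^(2H) ∫₀^(t/ε) (y^(H-1/2) - (y+1)^(H-1/2))² dy / Γ(H+1/2)²`, which is at most the same
expression with the integral over all of `(0, ∞)`. That integral converges because the integrand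
is `O(y^(2H-1))` at `0` and, by the mean value theorem, `O(y^(2H-3))` at `∞`.
-/

open Real MeasureTheory

namespace Real

lemma rpow_sub_rpow_add_one_nonneg {a y : ℝ} (ha : a ≤ 0) (hy : 0 < y) :
    0 ≤ y ^ a - (y + 1) ^ a :=
  sub_nonneg.2 (rpow_le_rpow_of_nonpos hy (by linarith) ha)

lemma rpow_sub_rpow_add_one_le {a y : ℝ} (ha : a < 0) (hy : 0 < y) :
    y ^ a - (y + 1) ^ a ≤ -a * y ^ (a - 1) := by
  have hzero : (0 : ℝ) ∉ Set.uIcc y (y + 1) := by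
    rw [Set.uIcc_of_le (by linarith)]
    exact fun h => absurd h.1 (by linarith)
  have hintegral : ∫ x in y..(y + 1), x ^ (a - 1) = ((y + 1) ^ a - y ^ a) / a := by
    rw [integral_rpow (Or.inr ⟨by linarith, hzero⟩)]
    ring_nf
  have hmono : ∫ x in y..(y + 1), x ^ (a - 1) ≤ ∫ _ in y..(y + 1), y ^ (a - 1) :=
    intervalIntegral.integral_mono_on (by linarith)
      (intervalIntegral.intervalIntegrable_rpow (Or.inr hzero)) intervalIntegrable_const
      fun x hx => rpow_le_rpow_of_nonpos hy hx.1 (by linarith)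
  rw [hintegral, intervalIntegral.integral_const, smul_eq_mul, add_sub_cancel_left, one_mul,
    div_le_iff_of_neg ha] at hmono
  linarith

lemma sq_rpow_sub_rpow_add_one_le_rpow {a y : ℝ} (ha : a ≤ 0) (hy : 0 < y) :
    (y ^ a - (y + 1) ^ a) ^ 2 ≤ y ^ (2 * a) := by
  have hdiff := rpow_sub_rpow_add_one_nonneg ha hy
  have hsucc : 0 ≤ (y + 1) ^ a := rpow_nonneg (by linarith) a
  calc (y ^ a - (y + 1) ^ a) ^ 2 ≤ (y ^ a) ^ 2 := by gcongr; linarith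
    _ = y ^ (2 * a) := by rw [← rpow_natCast, ← rpow_mul hy.le, mul_comm]; norm_num

lemma sq_rpow_sub_rpow_add_one_le_mul_rpow {a y : ℝ} (ha : a < 0) (hy : 0 < y) :
    (y ^ a - (y + 1) ^ a) ^ 2 ≤ a ^ 2 * y ^ (2 * a - 2) := by
  have hdiff := rpow_sub_rpow_add_one_nonneg ha.le hy
  calc (y ^ a - (y + 1) ^ a) ^ 2 ≤ (-a * y ^ (a - 1)) ^ 2 := by
        gcongr; exact rpow_sub_rpow_add_one_le ha hy
    _ = a ^ 2 * y ^ (2 * a - 2) := by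
        rw [mul_pow, neg_sq, ← rpow_natCast (y ^ (a - 1)), ← rpow_mul hy.le]
        congr 2
        push_cast
        ring

lemma continuousOn_sq_rpow_sub_rpow_add_one (a : ℝ) :
    ContinuousOn (fun y : ℝ => (y ^ a - (y + 1) ^ a) ^ 2) (Set.Ioi 0) := by
  refine ((continuousOn_id.rpow_const fun y hy => Or.inl hy.ne').sub
    ((continuous_add_const 1).continuousOn.rpow_const fun y hy => Or.inl ?_)).pow 2
  exact (add_pos (Set.mem_Ioi.1 hy) one_pos).ne'

lemma integrableOn_sq_rpow_sub_rpow_add_one {a : ℝ} (ha₀ : -1 / 2 < a) (ha : a < 0) :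
    IntegrableOn (fun y : ℝ => (y ^ a - (y + 1) ^ a) ^ 2) (Set.Ioi 0) := by
  have hcont := continuousOn_sq_rpow_sub_rpow_add_one a
  rw [← Set.Ioc_union_Ioi_eq_Ioi zero_le_one]
  refine IntegrableOn.union ?_ ?_
  · refine Integrable.mono' (intervalIntegral.intervalIntegrable_rpow' (r := 2 * a)
      (by linarith)).1 ((hcont.mono Set.Ioc_subset_Ioi_self).aestronglyMeasurable
        measurableSet_Ioc) ?_
    filter_upwards [ae_restrict_mem measurableSet_Ioc] with y hy
    rw [norm_of_nonneg (sq_nonneg _)]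
    exact sq_rpow_sub_rpow_add_one_le_rpow ha.le hy.1
  · refine Integrable.mono' ((integrableOn_Ioi_rpow_of_lt (a := 2 * a - 2) (by linarith) one_pos).const_mul
      (a ^ 2)) ((hcont.mono (Set.Ioi_subset_Ioi zero_le_one)).aestronglyMeasurable
        measurableSet_Ioi) ?_
    filter_upwards [ae_restrict_mem measurableSet_Ioi] with y hy
    rw [norm_of_nonneg (sq_nonneg _)]
    exact sq_rpow_sub_rpow_add_one_le_mul_rpow ha (zero_lt_one.trans hy)

lemma integral_sq_rpow_sub_rpow_add_eq (a : ℝ) {t ε : ℝ} (ht : 0 ≤ t) (hε : 0 < ε) :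
    ∫ s in (0 : ℝ)..t, ((t - s) ^ a - (t + ε - s) ^ a) ^ 2
      = ε ^ (2 * a + 1) * ∫ y in Set.Ioc 0 (t / ε), (y ^ a - (y + 1) ^ a) ^ 2 := by
  set F : ℝ → ℝ := fun u => (u ^ a - (u + ε) ^ a) ^ 2
  have hscale : ∀ y ∈ Set.Ioc 0 (t / ε),
      F (ε * y) = ε ^ (2 * a) * (y ^ a - (y + 1) ^ a) ^ 2 := by
    intro y hy
    simp only [F]
    rw [show ε * y + ε = ε * (y + 1) by ring, mul_rpow hε.le hy.1.le,
      mul_rpow hε.le (by linarith [hy.1]), ← mul_sub, mul_pow, ← rpow_natCast (ε ^ a),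
      ← rpow_mul hε.le, mul_comm a]
    norm_num
  calc ∫ s in (0 : ℝ)..t, ((t - s) ^ a - (t + ε - s) ^ a) ^ 2
      = ∫ s in (0 : ℝ)..t, F (t - s) := by simp only [F, sub_add_eq_add_sub]
    _ = ε * ∫ y in (0 : ℝ)..(t / ε), F (ε * y) := by
        rw [intervalIntegral.integral_comp_sub_left F t, sub_self, sub_zero, ← smul_eq_mul,
          intervalIntegral.smul_integral_comp_mul_left F ε, mul_zero,
          mul_div_cancel₀ _ hε.ne']
    _ = ε * ∫ y in Set.Ioc 0 (t / ε), ε ^ (2 * a) * (y ^ a - (y + 1) ^ a) ^ 2 := by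
        rw [intervalIntegral.integral_of_le (div_nonneg ht hε.le),
          setIntegral_congr_fun measurableSet_Ioc hscale]
    _ = ε ^ (2 * a + 1) * ∫ y in Set.Ioc 0 (t / ε), (y ^ a - (y + 1) ^ a) ^ 2 := by
        rw [integral_const_mul, ← mul_assoc, rpow_add_one hε.ne', mul_comm ε]

end Real

/-- For `H ∈ (0,1/2)`, with
`C_H = ∫₀^∞ (y^{H-1/2} - (y+1)^{H-1/2})² dy < ∞` (the integrand is integrable on `(0,∞)`),
for every `t ≥ 0` and `ε > 0`,
`∫₀^t (K(t,s) - K(t+ε,s))² ds ≤ C_H ε^{2H}/Γ(H+1/2)²`, where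
`K(t,s) = (t-s)^{H-1/2}/Γ(H+1/2)` and `K(t+ε,s) = (t+ε-s)^{H-1/2}/Γ(H+1/2)`. -/
theorem stmt_10 (H : ℝ) (hH : H ∈ Set.Ioo (0 : ℝ) (1/2)) :
    IntegrableOn (fun y : ℝ => (y ^ (H - 1/2) - (y + 1) ^ (H - 1/2)) ^ 2) (Set.Ioi 0) ∧
    ∀ t ε : ℝ, 0 ≤ t → 0 < ε →
      (∫ s in (0:ℝ)..t,
          ((t - s) ^ (H - 1/2) / Real.Gamma (H + 1/2)
            - (t + ε - s) ^ (H - 1/2) / Real.Gamma (H + 1/2)) ^ 2)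
        ≤ (∫ y in Set.Ioi (0:ℝ), (y ^ (H - 1/2) - (y + 1) ^ (H - 1/2)) ^ 2)
            * ε ^ (2 * H) / Real.Gamma (H + 1/2) ^ 2 := by
  obtain ⟨hH₀, hH₁⟩ := hH
  have hint := integrableOn_sq_rpow_sub_rpow_add_one (a := H - 1/2) (by linarith) (by linarith)
  refine ⟨hint, fun t ε ht hε => ?_⟩
  have htrunc : ∫ y in Set.Ioc 0 (t / ε), (y ^ (H - 1/2) - (y + 1) ^ (H - 1/2)) ^ 2
      ≤ ∫ y in Set.Ioi 0, (y ^ (H - 1/2) - (y + 1) ^ (H - 1/2)) ^ 2 :=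
    setIntegral_mono_set hint (.of_forall fun _ => sq_nonneg _)
      (.of_forall Set.Ioc_subset_Ioi_self)
  simp only [div_sub_div_same, div_pow]
  rw [intervalIntegral.integral_div, integral_sq_rpow_sub_rpow_add_eq _ ht hε,
    show 2 * (H - 1/2) + 1 = 2 * H by ring, mul_comm (∫ y in Set.Ioi 0, _)]
  gcongr
end

section
/- Let G : ℝ → ℝ be twice continuously differentiable on a neighborhood of v ∈ ℝ, and fix μ ∈ ℝ and v₂ ≥ 0. For h, h' > 0 define q₋ = (v₂ - μh')/(h(h+h')), q₀ = (-v₂ + μ(h'-h))/(hh'), q₊ = (v₂ + μh)/(h'(h+h')). Then q₋·G(v-h) + q₀·G(v) + q₊·G(v+h') → μ·G'(v) + (v₂/2)·G''(v) as (h,h') → (0⁺,0⁺). -/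
/-!
Write `R(t) = G(v+t) - G(v) - t G'(v) - t²/2 G''(v)`, which is `o(t²)` by Taylor's theorem
with Peano remainder. Because the rates `q₋, q₀, q₊` have total mass `0`, mean `μ` and second
moment `v₂` on the jumps `-h, 0, h'`, the combination `q₋ G(v-h) + q₀ G(v) + q₊ G(v+h')`
equals `μ G'(v) + v₂/2 G''(v) + q₋ R(-h) + q₊ R(h')`. Finally
`q₋ h² = (v₂ - μh') h/(h+h')` and `q₊ h'² = (v₂ + μh) h'/(h+h')` stay bounded,
so both error terms are `O(1) · o(1)`.
-/

open Filter Topology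

section Taylor

variable {G G' : ℝ → ℝ} {s : Set ℝ} {v : ℝ}

theorem ContDiffOn.eventually_hasDerivAt (hG : ContDiffOn ℝ 1 G s) (hs : s ∈ 𝓝 v) :
    ∀ᶠ x in 𝓝 v, HasDerivAt G (deriv G x) x := by
  filter_upwards [eventually_mem_nhds_iff.2 hs] with x hx
  exact ((hG.contDiffAt hx).differentiableAt one_ne_zero).hasDerivAt

theorem ContDiffOn.hasDerivAt_deriv (hG : ContDiffOn ℝ 2 G s) (hs : s ∈ 𝓝 v) :
    HasDerivAt (deriv G) (deriv (deriv G) v) v := by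
  have hG' : ContDiffOn ℝ 1 (deriv G) (interior s) :=
    (hG.mono interior_subset).deriv_of_isOpen isOpen_interior (by norm_num)
  exact (hG'.eventually_hasDerivAt (isOpen_interior.mem_nhds (mem_interior_iff_mem_nhds.2 hs)))
    |>.self_of_nhds

noncomputable def secondOrderRemainder (G : ℝ → ℝ) (v a c t : ℝ) : ℝ :=
  G (v + t) - G v - t * a - t ^ 2 / 2 * c

theorem isLittleO_secondOrderRemainder {c : ℝ} (hG : ∀ᶠ x in 𝓝 v, HasDerivAt G (G' x) x)
    (hG' : HasDerivAt G' c v) :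
    secondOrderRemainder G v (G' v) c =o[𝓝 0] fun t => t ^ 2 := by
  obtain ⟨ε, hε, hball⟩ := Metric.eventually_nhds_iff_ball.mp hG
  have hnhds : 𝓝[Metric.ball v ε] v = 𝓝 v :=
    Metric.isOpen_ball.nhdsWithin_eq (Metric.mem_ball_self hε)
  set φ : ℝ → ℝ := fun x => G x - x * G' v - (x - v) ^ 2 / 2 * c
  have hφ : ∀ x ∈ Metric.ball v ε,
      HasDerivWithinAt φ (G' x - G' v - (x - v) * c) (Metric.ball v ε) x := by
    intro x hx
    have hφx : HasDerivAt φ (G' x - 1 * G' v - 2 * (x - v) ^ 1 * 1 / 2 * c) x :=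
      ((hball x hx).sub ((hasDerivAt_id x).mul_const (G' v))).sub
        ((((hasDerivAt_id x).sub_const v).pow 2).div_const 2 |>.mul_const c)
    exact (hφx.congr_deriv (by ring)).hasDerivWithinAt
  have hφ' : (fun x => G' x - G' v - (x - v) * c) =o[𝓝[Metric.ball v ε] v]
      fun x => (x - v) ^ 1 := by
    simpa [hnhds, smul_eq_mul, mul_comm] using hasDerivAt_iff_isLittleO.mp hG'
  have hφ2 := (convex_ball v ε).isLittleO_pow_succ_real (Metric.mem_ball_self hε) hφ hφ'
  rw [hnhds] at hφ2
  have hshift : Tendsto (fun t : ℝ => v + t) (𝓝 0) (𝓝 v) := by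
    simpa using (continuous_const_add v).tendsto 0
  refine (hφ2.comp_tendsto hshift).congr (fun t => ?_) (fun t => ?_)
  · simp only [Function.comp, φ, secondOrderRemainder]
    ring
  · simp

end Taylor

theorem combination_eq_add_remainders (G : ℝ → ℝ) {v a c μ v₂ h h' qL qC qR : ℝ}
    (hsum : qL + qC + qR = 0) (hmean : -h * qL + h' * qR = μ)
    (hvar : h ^ 2 * qL + h' ^ 2 * qR = v₂) :
    qL * G (v - h) + qC * G v + qR * G (v + h') =
      μ * a + v₂ / 2 * c + qL * secondOrderRemainder G v a c (-h)
        + qR * secondOrderRemainder G v a c h' := by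
  rw [secondOrderRemainder, secondOrderRemainder, ← sub_eq_add_neg]
  linear_combination G v * hsum + a * hmean + c / 2 * hvar

theorem tendsto_mul_of_isLittleO_sq {α : Type*} {l : Filter α} {R : ℝ → ℝ}
    (hR : R =o[𝓝 0] fun t => t ^ 2) {δ q : α → ℝ} (hδ : Tendsto δ l (𝓝 0))
    (hδ0 : ∀ᶠ x in l, δ x ≠ 0)
    (hq : IsBoundedUnder (· ≤ ·) l fun x => ‖q x * δ x ^ 2‖) :
    Tendsto (fun x => q x * R (δ x)) l (𝓝 0) := by
  refine (isBoundedUnder_le_mul_tendsto_zero hq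
    (hR.tendsto_div_nhds_zero.comp hδ)).congr' ?_
  filter_upwards [hδ0] with x hx
  rw [Function.comp_apply]
  field_simp

noncomputable def rateLeft (μ v₂ h h' : ℝ) : ℝ := (v₂ - μ * h') / (h * (h + h'))

noncomputable def rateCenter (μ v₂ h h' : ℝ) : ℝ := (-v₂ + μ * (h' - h)) / (h * h')

noncomputable def rateRight (μ v₂ h h' : ℝ) : ℝ := (v₂ + μ * h) / (h' * (h + h'))

section Rates

variable {μ v₂ h h' : ℝ}

theorem rateLeft_add_rateCenter_add_rateRight (hh : 0 < h) (hh' : 0 < h') :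
    rateLeft μ v₂ h h' + rateCenter μ v₂ h h' + rateRight μ v₂ h h' = 0 := by
  unfold rateLeft rateCenter rateRight
  field_simp
  ring

theorem neg_mul_rateLeft_add_mul_rateRight (hh : 0 < h) (hh' : 0 < h') :
    -h * rateLeft μ v₂ h h' + h' * rateRight μ v₂ h h' = μ := by
  unfold rateLeft rateRight
  field_simp
  ring

theorem sq_mul_rateLeft_add_sq_mul_rateRight (hh : 0 < h) (hh' : 0 < h') :
    h ^ 2 * rateLeft μ v₂ h h' + h' ^ 2 * rateRight μ v₂ h h' = v₂ := by
  unfold rateLeft rateRight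
  field_simp
  ring

theorem rateRight_eq_rateLeft (μ v₂ h h' : ℝ) :
    rateRight μ v₂ h h' = rateLeft (-μ) v₂ h' h := by
  unfold rateLeft rateRight
  rw [add_comm h]
  ring

theorem abs_rateLeft_mul_sq_le (hh : 0 < h) (hh' : 0 < h') :
    |rateLeft μ v₂ h h' * h ^ 2| ≤ |v₂| + |μ| * h' := by
  have hsum : 0 < h + h' := by linarith
  have hratio : rateLeft μ v₂ h h' * h ^ 2 = (v₂ - μ * h') * (h / (h + h')) := by
    unfold rateLeft
    field_simp
  calc |rateLeft μ v₂ h h' * h ^ 2| = |v₂ - μ * h'| * (h / (h + h')) := by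
        rw [hratio, abs_mul, abs_of_pos (div_pos hh hsum)]
    _ ≤ |v₂ - μ * h'| * 1 := by
        gcongr
        exact (div_le_one hsum).2 (by linarith)
    _ ≤ |v₂| + |μ * h'| := by simpa using abs_sub v₂ (μ * h')
    _ = |v₂| + |μ| * h' := by rw [abs_mul, abs_of_pos hh']

theorem abs_rateRight_mul_sq_le (hh : 0 < h) (hh' : 0 < h') :
    |rateRight μ v₂ h h' * h' ^ 2| ≤ |v₂| + |μ| * h := by
  simpa [rateRight_eq_rateLeft] using abs_rateLeft_mul_sq_le (μ := -μ) (v₂ := v₂) hh' hh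

end Rates

section Limits

variable {R : ℝ → ℝ} (μ v₂ : ℝ)

theorem eventually_pos_fst_and_pos_snd :
    ∀ᶠ p : ℝ × ℝ in 𝓝[>] (0 : ℝ) ×ˢ 𝓝[>] (0 : ℝ), 0 < p.1 ∧ 0 < p.2 :=
  prod_mem_prod self_mem_nhdsWithin self_mem_nhdsWithin

theorem tendsto_rateLeft_mul (hR : R =o[𝓝 0] fun t => t ^ 2) :
    Tendsto (fun p : ℝ × ℝ => rateLeft μ v₂ p.1 p.2 * R (-p.1))
      (𝓝[>] (0 : ℝ) ×ˢ 𝓝[>] (0 : ℝ)) (𝓝 0) := by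
  have hfst : Tendsto Prod.fst (𝓝[>] (0 : ℝ) ×ˢ 𝓝[>] (0 : ℝ)) (𝓝 0) :=
    tendsto_fst.mono_right nhdsWithin_le_nhds
  have hsnd : Tendsto Prod.snd (𝓝[>] (0 : ℝ) ×ˢ 𝓝[>] (0 : ℝ)) (𝓝 0) :=
    tendsto_snd.mono_right nhdsWithin_le_nhds
  refine tendsto_mul_of_isLittleO_sq hR (by simpa using hfst.neg) ?_ ?_
  · filter_upwards [eventually_pos_fst_and_pos_snd] with p hp using neg_ne_zero.2 hp.1.ne'
  · refine ((hsnd.const_mul |μ|).const_add |v₂|).isBoundedUnder_le.mono_le ?_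
    filter_upwards [eventually_pos_fst_and_pos_snd] with p ⟨hp₁, hp₂⟩
    simpa only [Real.norm_eq_abs, neg_sq] using abs_rateLeft_mul_sq_le hp₁ hp₂

theorem tendsto_rateRight_mul (hR : R =o[𝓝 0] fun t => t ^ 2) :
    Tendsto (fun p : ℝ × ℝ => rateRight μ v₂ p.1 p.2 * R p.2)
      (𝓝[>] (0 : ℝ) ×ˢ 𝓝[>] (0 : ℝ)) (𝓝 0) := by
  have hfst : Tendsto Prod.fst (𝓝[>] (0 : ℝ) ×ˢ 𝓝[>] (0 : ℝ)) (𝓝 0) :=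
    tendsto_fst.mono_right nhdsWithin_le_nhds
  have hsnd : Tendsto Prod.snd (𝓝[>] (0 : ℝ) ×ˢ 𝓝[>] (0 : ℝ)) (𝓝 0) :=
    tendsto_snd.mono_right nhdsWithin_le_nhds
  refine tendsto_mul_of_isLittleO_sq hR hsnd ?_ ?_
  · filter_upwards [eventually_pos_fst_and_pos_snd] with p hp using hp.2.ne'
  · refine ((hfst.const_mul |μ|).const_add |v₂|).isBoundedUnder_le.mono_le ?_
    filter_upwards [eventually_pos_fst_and_pos_snd] with p ⟨hp₁, hp₂⟩
    simpa only [Real.norm_eq_abs] using abs_rateRight_mul_sq_le hp₁ hp₂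

end Limits

theorem stmt_16_general (G : ℝ → ℝ) (v : ℝ) (s : Set ℝ) (hs : s ∈ nhds v)
    (hG : ContDiffOn ℝ 2 G s) (μ v₂ : ℝ) :
    Filter.Tendsto
      (fun p : ℝ × ℝ =>
        (v₂ - μ * p.2) / (p.1 * (p.1 + p.2)) * G (v - p.1)
          + (-v₂ + μ * (p.2 - p.1)) / (p.1 * p.2) * G v
          + (v₂ + μ * p.1) / (p.2 * (p.1 + p.2)) * G (v + p.2))
      ((nhdsWithin 0 (Set.Ioi 0)) ×ˢ (nhdsWithin 0 (Set.Ioi 0)))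
      (nhds (μ * deriv G v + v₂ / 2 * deriv (deriv G) v)) := by
  have hR : secondOrderRemainder G v (deriv G v) (deriv (deriv G) v) =o[𝓝 0] fun t => t ^ 2 :=
    isLittleO_secondOrderRemainder ((hG.of_le (by norm_num)).eventually_hasDerivAt hs)
      (hG.hasDerivAt_deriv hs)
  have hlim := ((tendsto_const_nhds (x := μ * deriv G v + v₂ / 2 * deriv (deriv G) v)).add
    (tendsto_rateLeft_mul μ v₂ hR)).add (tendsto_rateRight_mul μ v₂ hR)
  rw [add_zero, add_zero] at hlim
  refine hlim.congr' ?_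
  filter_upwards [eventually_pos_fst_and_pos_snd] with p ⟨hp₁, hp₂⟩
  exact (combination_eq_add_remainders G (rateLeft_add_rateCenter_add_rateRight hp₁ hp₂)
    (neg_mul_rateLeft_add_mul_rateRight hp₁ hp₂)
    (sq_mul_rateLeft_add_sq_mul_rateRight hp₁ hp₂)).symm

/-- Let `G : ℝ → ℝ` be twice continuously differentiable near `v`, `μ ∈ ℝ`,
`v₂ ≥ 0`. With the moment-matched CTMC rates
`q₋ = (v₂ - μh')/(h(h+h'))`, `q₀ = (-v₂ + μ(h'-h))/(hh')`, `q₊ = (v₂ + μh)/(h'(h+h'))`,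
one has `q₋ G(v-h) + q₀ G(v) + q₊ G(v+h') → μ G'(v) + (v₂/2) G''(v)` as
`(h,h') → (0⁺,0⁺)`. -/
theorem stmt_16 (G : ℝ → ℝ) (v : ℝ) (s : Set ℝ) (hs : s ∈ nhds v)
    (hG : ContDiffOn ℝ 2 G s) (μ v₂ : ℝ) (hv₂ : 0 ≤ v₂) :
    Filter.Tendsto
      (fun p : ℝ × ℝ =>
        (v₂ - μ * p.2) / (p.1 * (p.1 + p.2)) * G (v - p.1)
          + (-v₂ + μ * (p.2 - p.1)) / (p.1 * p.2) * G v
          + (v₂ + μ * p.1) / (p.2 * (p.1 + p.2)) * G (v + p.2))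
      ((nhdsWithin 0 (Set.Ioi 0)) ×ˢ (nhdsWithin 0 (Set.Ioi 0)))
      (nhds (μ * deriv G v + v₂ / 2 * deriv (deriv G) v)) :=
  stmt_16_general G v s hs hG μ v₂
end
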